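/- Let H be a Hopf algebra, P a right H-comodule algebra with coinvariants B satisfying the Hopf–Galois condition, and f : H → P a convolution-invertible linear map with f(1)=1 intertwining Ad and Δ_P (i.e. (f ⊗ id)∘Ad = Δ_P∘f). Define F_f : P → P by F_f := m_P ∘ (id_P ⊗ f) ∘ Δ_P. Then F_f is a left B-module bijection satisfying F_f(1) = 1, (F_f ⊗ id_H)∘Δ_P = Δ_P∘F_f, and F_f⁻¹ = F_{f⁻¹}. -/

import Mathlib

open TensorProduct

noncomputable section

variable {H P : Type*} [Ring H] [HopfAlgebra ℂ H] [Ring P] [Algebra ℂ P]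

/-- The right adjoint coaction `Ad(g) = g⁽²⁾ ⊗ S(g⁽¹⁾)·g⁽³⁾`. -/
def adjointCoaction : H →ₗ[ℂ] H ⊗[ℂ] H :=
  (TensorProduct.map LinearMap.id (LinearMap.mul' ℂ H))
    ∘ₗ (TensorProduct.assoc ℂ H H H).toLinearMap
    ∘ₗ (TensorProduct.map
          ((TensorProduct.comm ℂ H H).toLinearMap ∘ₗ
            TensorProduct.map (HopfAlgebra.antipode (R := ℂ)) LinearMap.id)
          LinearMap.id)
    ∘ₗ (TensorProduct.map (Coalgebra.comul (R := ℂ)) LinearMap.id)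
    ∘ₗ Coalgebra.comul (R := ℂ)

def conv (f₁ f₂ : H →ₗ[ℂ] P) : H →ₗ[ℂ] P :=
  LinearMap.mul' ℂ P ∘ₗ TensorProduct.map f₁ f₂ ∘ₗ Coalgebra.comul (R := ℂ)

def convUnit : H →ₗ[ℂ] P :=
  Algebra.linearMap ℂ P ∘ₗ Coalgebra.counit (R := ℂ)

/-- `F_f(x) = x⁽⁰⁾ f(x⁽¹⁾)`. -/
def Ff (ΔP : P →ₗ[ℂ] P ⊗[ℂ] H) (f : H →ₗ[ℂ] P) : P →ₗ[ℂ] P :=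
  LinearMap.mul' ℂ P ∘ₗ TensorProduct.map LinearMap.id f ∘ₗ ΔP

/-!
In the convolution algebra `Hom(H, P ⊗ H)` put `ι φ := (p ↦ p ⊗ 1) ∘ φ`, `τ := (h ↦ 1 ⊗ h)` and
`σ := (h ↦ 1 ⊗ S h)`. Then `(φ ⊗ id) ∘ Ad = σ ∗ ι φ ∗ τ` with `σ ∗ τ = τ ∗ σ = 1`, so
`φ ↦ (φ ⊗ id) ∘ Ad` is a monoid homomorphism, as is `φ ↦ Δ_P ∘ φ`. Equivariance of `f` says that
the two agree on `f`, hence they also agree on its convolution inverse `f⁻¹`.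

By coassociativity, `x ↦ ρ(x⁽⁰⁾) ψ(x⁽¹⁾)` defines a right action of the convolution algebra on
maps `ρ : P → A`, and `F_φ` is the action of `φ` on the identity. Equivariance of `F_φ` follows
from `τ ∗ ((φ ⊗ id) ∘ Ad) = ι φ ∗ τ`, and then `F_ψ ∘ F_φ` is the action of `φ ∗ ψ`.
-/

open WithConv Coalgebra Algebra.TensorProduct
open scoped RingTheory.LinearMap

section Convolution

variable {R C M A B : Type*} [CommSemiring R] [AddCommMonoid C] [Module R C]
  [AddCommMonoid M] [Module R M] [Semiring A] [Algebra R A] [Semiring B] [Algebra R B]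

def AlgHom.compConv [Coalgebra R C] (g : A →ₐ[R] B) :
    WithConv (C →ₗ[R] A) →* WithConv (C →ₗ[R] B) where
  toFun ψ := toConv (g.toLinearMap ∘ₗ ψ.ofConv)
  map_one' := by ext; simp
  map_mul' ψ₁ ψ₂ := by rw [LinearMap.algHom_comp_convMul_distrib]

lemma AlgHom.compConv_apply [Coalgebra R C] (g : A →ₐ[R] B) (ψ : WithConv (C →ₗ[R] A)) :
    g.compConv ψ = toConv (g.toLinearMap ∘ₗ ψ.ofConv) := rfl

def coactConv (ΔM : M →ₗ[R] M ⊗[R] C) (ρ : M →ₗ[R] A) (ψ : WithConv (C →ₗ[R] A)) :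
    M →ₗ[R] A :=
  μ ∘ₗ (ρ ⊗ₘ ψ.ofConv) ∘ₗ ΔM

lemma coactConv_mul [Coalgebra R C] (ΔM : M →ₗ[R] M ⊗[R] C)
    (hcoassoc : ∀ x : M,
      TensorProduct.assoc R M C C ((ΔM ⊗ₘ LinearMap.id) (ΔM x)) = (LinearMap.id ⊗ₘ δ) (ΔM x))
    (ρ : M →ₗ[R] A) (ψ₁ ψ₂ : WithConv (C →ₗ[R] A)) :
    coactConv ΔM ρ (ψ₁ * ψ₂) = coactConv ΔM (coactConv ΔM ρ ψ₁) ψ₂ := by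
  have hμ : μ ∘ₗ (ρ ⊗ₘ μ ∘ₗ (ψ₁.ofConv ⊗ₘ ψ₂.ofConv)) =
      μ ∘ₗ (μ ∘ₗ (ρ ⊗ₘ ψ₁.ofConv) ⊗ₘ ψ₂.ofConv) ∘ₗ
        (TensorProduct.assoc R M C C).symm.toLinearMap := by
    ext; simp [mul_assoc]
  have hleft : ρ ⊗ₘ (ψ₁ * ψ₂).ofConv =
      (ρ ⊗ₘ μ ∘ₗ (ψ₁.ofConv ⊗ₘ ψ₂.ofConv)) ∘ₗ (LinearMap.id ⊗ₘ δ) := by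
    rw [← TensorProduct.map_comp, LinearMap.comp_id, LinearMap.comp_assoc]
    rfl
  have hright : μ ∘ₗ (ρ ⊗ₘ ψ₁.ofConv) ∘ₗ ΔM ⊗ₘ ψ₂.ofConv =
      (μ ∘ₗ (ρ ⊗ₘ ψ₁.ofConv) ⊗ₘ ψ₂.ofConv) ∘ₗ (ΔM ⊗ₘ LinearMap.id) := by
    rw [← TensorProduct.map_comp, LinearMap.comp_id, LinearMap.comp_assoc]
  ext x
  simp only [coactConv, LinearMap.comp_apply]
  rw [hleft, hright, LinearMap.comp_apply, LinearMap.comp_apply, ← hcoassoc x,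
    ← LinearMap.comp_apply μ, hμ]
  simp

lemma coactConv_one [Coalgebra R C] (ΔM : M →ₗ[R] M ⊗[R] C)
    (hcounit : ∀ x : M, TensorProduct.rid R M ((LinearMap.id ⊗ₘ ε) (ΔM x)) = x)
    (ρ : M →ₗ[R] A) : coactConv ΔM ρ 1 = ρ := by
  have hunit : μ ∘ₗ (ρ ⊗ₘ (1 : WithConv (C →ₗ[R] A)).ofConv) =
      ρ ∘ₗ (TensorProduct.rid R M).toLinearMap ∘ₗ (LinearMap.id ⊗ₘ ε) := by
    ext; simp [LinearMap.convOne_def, Algebra.smul_def, Algebra.commutes]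
  ext x
  simp only [coactConv, LinearMap.comp_apply]
  rw [← LinearMap.comp_apply μ, hunit]
  simp [hcounit]

lemma AlgHom.comp_coactConv [Coalgebra R C] (ΔM : M →ₗ[R] M ⊗[R] C) (g : A →ₐ[R] B)
    (ρ : M →ₗ[R] A) (ψ : WithConv (C →ₗ[R] A)) :
    g.toLinearMap ∘ₗ coactConv ΔM ρ ψ = coactConv ΔM (g.toLinearMap ∘ₗ ρ) (g.compConv ψ) := by
  simp only [coactConv, AlgHom.compConv_apply, ← LinearMap.comp_assoc, AlgHom.comp_mul',
    TensorProduct.map_comp]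

end Convolution

lemma coactConv_includeLeft_includeRight {R M A C : Type*} [CommSemiring R] [AddCommMonoid M]
    [Module R M] [Semiring A] [Algebra R A] [Semiring C] [Bialgebra R C]
    (ΔM : M →ₗ[R] M ⊗[R] C) (ρ : M →ₗ[R] A) :
    coactConv ΔM ((includeLeft (S := R)).toLinearMap ∘ₗ ρ)
        ((includeRight : C →ₐ[R] A ⊗[R] C).compConv (toConv LinearMap.id)) =
      (ρ ⊗ₘ LinearMap.id) ∘ₗ ΔM := by
  have h : μ ∘ₗ ((includeLeft (S := R)).toLinearMap ∘ₗ ρ ⊗ₘ includeRight.toLinearMap) =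
      ρ ⊗ₘ (LinearMap.id : C →ₗ[R] C) := by
    ext; simp
  simp only [coactConv, ← LinearMap.comp_assoc, ← h]
  rfl

section Adjoint

variable {A : Type*} [Semiring A] [Algebra ℂ A]

lemma includeRight_mul_antipode :
    (includeRight : H →ₐ[ℂ] A ⊗[ℂ] H).compConv (toConv LinearMap.id) *
      includeRight.compConv (toConv (HopfAlgebra.antipode ℂ)) = 1 := by
  rw [← map_mul, LinearMap.id_mul_antipode, map_one]

lemma antipode_mul_includeRight :
    (includeRight : H →ₐ[ℂ] A ⊗[ℂ] H).compConv (toConv (HopfAlgebra.antipode ℂ)) *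
      includeRight.compConv (toConv LinearMap.id) = 1 := by
  rw [← map_mul, LinearMap.antipode_mul_id, map_one]

lemma toConv_map_comp_adjointCoaction (φ : H →ₗ[ℂ] A) :
    toConv ((φ ⊗ₘ LinearMap.id) ∘ₗ adjointCoaction) =
      (includeRight : H →ₐ[ℂ] A ⊗[ℂ] H).compConv (toConv (HopfAlgebra.antipode ℂ)) *
        includeLeft.compConv (toConv φ) * includeRight.compConv (toConv LinearMap.id) := by
  ext h
  rw [(ℛ ℂ h).convMul_apply]
  simp only [adjointCoaction, LinearMap.comp_apply, ← (ℛ ℂ h).eq, map_sum,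
    TensorProduct.map_tmul, LinearMap.id_coe, id_eq]
  refine Finset.sum_congr rfl fun i _ => ?_
  rw [(ℛ ℂ ((ℛ ℂ h).left i)).convMul_apply, ← (ℛ ℂ ((ℛ ℂ h).left i)).eq]
  simp [AlgHom.compConv_apply, TensorProduct.sum_tmul, Finset.sum_mul]

def adjointConvHom : WithConv (H →ₗ[ℂ] A) →* WithConv (H →ₗ[ℂ] A ⊗[ℂ] H) where
  toFun φ := toConv ((φ.ofConv ⊗ₘ LinearMap.id) ∘ₗ adjointCoaction)
  map_one' := by
    rw [toConv_map_comp_adjointCoaction, toConv_ofConv, map_one, mul_one,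
      antipode_mul_includeRight]
  map_mul' φ ψ := by
    simp only [toConv_map_comp_adjointCoaction, toConv_ofConv, map_mul, mul_assoc]
    rw [← mul_assoc (includeRight.compConv (toConv LinearMap.id)), includeRight_mul_antipode,
      one_mul]

lemma adjointConvHom_apply (φ : WithConv (H →ₗ[ℂ] A)) :
    adjointConvHom φ = toConv ((φ.ofConv ⊗ₘ LinearMap.id) ∘ₗ adjointCoaction) :=
  rfl

lemma includeRight_mul_adjointConvHom (φ : WithConv (H →ₗ[ℂ] A)) :
    (includeRight : H →ₐ[ℂ] A ⊗[ℂ] H).compConv (toConv LinearMap.id) * adjointConvHom φ =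
      includeLeft.compConv φ * includeRight.compConv (toConv LinearMap.id) := by
  rw [adjointConvHom_apply, toConv_map_comp_adjointCoaction, toConv_ofConv,
    ← mul_assoc, ← mul_assoc, includeRight_mul_antipode, one_mul]

end Adjoint

lemma MonoidHom.eq_on_inverse {M N : Type*} [Monoid M] [Monoid N] (F G : M →* N) {a b : M}
    (h : F a = G a) (hab : a * b = 1) (hba : b * a = 1) : F b = G b :=
  (left_inv_eq_right_inv (a := F a) (by rw [h, ← map_mul, hba, map_one])
    (by rw [← map_mul, hab, map_one])).symm

lemma Ff_one (ΔP : P →ₐ[ℂ] P ⊗[ℂ] H) {φ : H →ₗ[ℂ] P} (hφ : φ 1 = 1) :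
    Ff ΔP.toLinearMap φ 1 = 1 := by
  simp [Ff, Algebra.TensorProduct.one_def, hφ]

lemma Ff_mul_of_coinvariant (ΔP : P →ₐ[ℂ] P ⊗[ℂ] H) (φ : H →ₗ[ℂ] P) {b : P}
    (hb : ΔP b = b ⊗ₜ[ℂ] 1) (x : P) :
    Ff ΔP.toLinearMap φ (b * x) = b * Ff ΔP.toLinearMap φ x := by
  have h : μ ∘ₗ (LinearMap.id ⊗ₘ φ) ∘ₗ LinearMap.mulLeft ℂ (b ⊗ₜ[ℂ] (1 : H)) =
      LinearMap.mulLeft ℂ b ∘ₗ μ ∘ₗ (LinearMap.id ⊗ₘ φ) := by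
    ext; simp [mul_assoc]
  simpa [Ff, hb] using LinearMap.congr_fun h (ΔP x)

lemma map_Ff_id_comp (ΔP : P →ₐ[ℂ] P ⊗[ℂ] H)
    (hcoassoc : ∀ x : P, TensorProduct.assoc ℂ P H H ((ΔP.toLinearMap ⊗ₘ LinearMap.id) (ΔP x)) =
      (LinearMap.id ⊗ₘ δ) (ΔP x))
    {φ : H →ₗ[ℂ] P} (hφ : adjointConvHom (toConv φ) = ΔP.compConv (toConv φ)) :
    (Ff ΔP.toLinearMap φ ⊗ₘ LinearMap.id) ∘ₗ ΔP.toLinearMap =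
      ΔP.toLinearMap ∘ₗ Ff ΔP.toLinearMap φ := by
  set ι := (includeLeft : P →ₐ[ℂ] P ⊗[ℂ] H)
  set τ := (includeRight : H →ₐ[ℂ] P ⊗[ℂ] H).compConv (toConv LinearMap.id)
  have hΔ : ΔP.toLinearMap = coactConv ΔP.toLinearMap ι.toLinearMap τ := by
    have h := coactConv_includeLeft_includeRight ΔP.toLinearMap LinearMap.id
    rw [TensorProduct.map_id, LinearMap.id_comp, LinearMap.comp_id] at h
    exact h.symm
  symm
  calc ΔP.toLinearMap ∘ₗ coactConv ΔP.toLinearMap LinearMap.id (toConv φ)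
      = coactConv ΔP.toLinearMap ΔP.toLinearMap (adjointConvHom (toConv φ)) := by
        rw [AlgHom.comp_coactConv, LinearMap.comp_id, hφ]
    _ = coactConv ΔP.toLinearMap ι.toLinearMap (τ * adjointConvHom (toConv φ)) := by
        rw [coactConv_mul _ hcoassoc, ← hΔ]
    _ = coactConv ΔP.toLinearMap (ι.toLinearMap ∘ₗ Ff ΔP.toLinearMap φ) τ := by
        rw [includeRight_mul_adjointConvHom, coactConv_mul _ hcoassoc,
          ← LinearMap.comp_id ι.toLinearMap, ← AlgHom.comp_coactConv]
        rfl
    _ = (Ff ΔP.toLinearMap φ ⊗ₘ LinearMap.id) ∘ₗ ΔP.toLinearMap :=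
        coactConv_includeLeft_includeRight _ _

lemma Ff_comp_Ff_eq_id (ΔP : P →ₐ[ℂ] P ⊗[ℂ] H)
    (hcounit : ∀ x : P, TensorProduct.rid ℂ P ((LinearMap.id ⊗ₘ ε) (ΔP x)) = x)
    (hcoassoc : ∀ x : P, TensorProduct.assoc ℂ P H H ((ΔP.toLinearMap ⊗ₘ LinearMap.id) (ΔP x)) =
      (LinearMap.id ⊗ₘ δ) (ΔP x))
    {φ ψ : H →ₗ[ℂ] P} (hφ : adjointConvHom (toConv φ) = ΔP.compConv (toConv φ))
    (hφψ : toConv φ * toConv ψ = 1) :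
    Ff ΔP.toLinearMap ψ ∘ₗ Ff ΔP.toLinearMap φ = LinearMap.id := by
  calc Ff ΔP.toLinearMap ψ ∘ₗ Ff ΔP.toLinearMap φ
      = μ ∘ₗ (LinearMap.id ⊗ₘ ψ) ∘ₗ (Ff ΔP.toLinearMap φ ⊗ₘ LinearMap.id) ∘ₗ ΔP.toLinearMap := by
        rw [map_Ff_id_comp ΔP hcoassoc hφ]
        rfl
    _ = coactConv ΔP.toLinearMap (coactConv ΔP.toLinearMap LinearMap.id (toConv φ))
          (toConv ψ) := by
        rw [← LinearMap.comp_assoc ΔP.toLinearMap, ← TensorProduct.map_comp, LinearMap.id_comp,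
          LinearMap.comp_id]
        rfl
    _ = LinearMap.id := by
        rw [← coactConv_mul _ hcoassoc, hφψ, coactConv_one _ hcounit]

theorem Ff_properties
    (ΔP : P →ₗ[ℂ] P ⊗[ℂ] H)
    (hPmul : ∀ x y : P, ΔP (x * y) = ΔP x * ΔP y) (hPone : ΔP 1 = 1)
    (hcounit : ∀ x : P,
      (TensorProduct.rid ℂ P)
        ((TensorProduct.map LinearMap.id (Coalgebra.counit (R := ℂ))) (ΔP x)) = x)
    (hcoassoc : ∀ x : P,
      (TensorProduct.assoc ℂ P H H)
        ((TensorProduct.map ΔP LinearMap.id) (ΔP x)) =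
      (TensorProduct.map LinearMap.id (Coalgebra.comul (R := ℂ))) (ΔP x))
    -- the convolution-invertible equivariant map `f`, with inverse `finv`
    (f finv : H →ₗ[ℂ] P) (hf1 : f 1 = 1)
    (hequiv : ∀ g : H, (TensorProduct.map f LinearMap.id) (adjointCoaction g) =
      ΔP (f g))
    (hinv₁ : conv f finv = convUnit) (hinv₂ : conv finv f = convUnit) :
    Ff ΔP f 1 = 1 ∧
    (∀ b : P, ΔP b = b ⊗ₜ[ℂ] 1 → ∀ x : P, Ff ΔP f (b * x) = b * Ff ΔP f x) ∧
    Function.Bijective (Ff ΔP f) ∧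
    (∀ x : P, (TensorProduct.map (Ff ΔP f) LinearMap.id) (ΔP x) = ΔP (Ff ΔP f x)) ∧
    (∀ x : P, Ff ΔP f (Ff ΔP finv x) = x ∧ Ff ΔP finv (Ff ΔP f x) = x) := by
  let Δ : P →ₐ[ℂ] P ⊗[ℂ] H := AlgHom.ofLinearMap ΔP hPone hPmul
  have hf : adjointConvHom (toConv f) = Δ.compConv (toConv f) := by
    ext g
    exact hequiv g
  have hfinv : adjointConvHom (toConv finv) = Δ.compConv (toConv finv) :=
    MonoidHom.eq_on_inverse _ _ hf (congrArg toConv hinv₁) (congrArg toConv hinv₂)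
  have hleft := Ff_comp_Ff_eq_id Δ hcounit hcoassoc hf (congrArg toConv hinv₁)
  have hright := Ff_comp_Ff_eq_id Δ hcounit hcoassoc hfinv (congrArg toConv hinv₂)
  refine ⟨Ff_one Δ hf1, fun b hb x => Ff_mul_of_coinvariant Δ f hb x,
    Function.bijective_iff_has_inverse.mpr
      ⟨Ff ΔP finv, LinearMap.congr_fun hleft, LinearMap.congr_fun hright⟩,
    LinearMap.congr_fun (map_Ff_id_comp Δ hcoassoc hf),
    fun x => ⟨LinearMap.congr_fun hright x, LinearMap.congr_fun hleft x⟩⟩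

end
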